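/- arXiv:2409.17662 — 6 statements merged into one kernel-verified Lean document; each statement's English description precedes it below -/
import Mathlib

section
/- For n ≥ 3, the QE constant of the graph K_{2,n}^2 (the complete bipartite graph K_{2,n} with 2 disjoint edges removed) equals (n − 8 + √(5n² − 24n + 32))/(n + 2). -/
/-- The almost complete bipartite graph `K_{m,n}^t`: the complete bipartite graph on
parts `Fin m` and `Fin n`, with the `t` disjoint edges `{u_i, v_i}`, `i < t`, removed. -/
def Kmnt (m n t : ℕ) : SimpleGraph (Fin m ⊕ Fin n) :=
  SimpleGraph.fromRel (fun x y =>
    match x, y with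
    | Sum.inl i, Sum.inr j => ¬((i : ℕ) = (j : ℕ) ∧ (i : ℕ) < t)
    | _, _ => False)

/-
Distances in `K_{2,n}^2` are 1 or 3 across the parts (3 exactly for the removed edges) and 2
within a part, except `d(v₀, v₁) = 4`. Hence `fᵀ D f` depends on the values `a, b, x₀, x₁` at
`u₀, u₁, v₀, v₁` and only on the sum `W` and the sum of squares `T` of the remaining `k = n - 2`
values, which satisfy `W² ≤ k T` (Cauchy–Schwarz). Splitting into parts symmetric and antisymmetric under `(u₀, v₀) ↔ (u₁, v₁)`,
`λ ‖f‖² - fᵀ D f` becomes a sum of squares plus multiples of `k T - W²` and of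
`(k + 4) λ² - 2 (k - 6) λ - 4 (k - 2)`, whose larger root is the claimed value. Equality holds
for the symmetric vector that is constant on the remaining vertices and kills every square.
-/

open SimpleGraph Sum Real

namespace Kmnt

variable {m n t : ℕ}

@[simp] lemma adj_inl_inr {i : Fin m} {j : Fin n} :
    (Kmnt m n t).Adj (inl i) (inr j) ↔ ¬((i : ℕ) = j ∧ (i : ℕ) < t) := by
  simp [Kmnt]

@[simp] lemma adj_inr_inl {i : Fin m} {j : Fin n} :
    (Kmnt m n t).Adj (inr j) (inl i) ↔ ¬((i : ℕ) = j ∧ (i : ℕ) < t) := by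
  rw [adj_comm, adj_inl_inr]

@[simp] lemma not_adj_inl_inl {i i' : Fin m} : ¬(Kmnt m n t).Adj (inl i) (inl i') := by
  simp [Kmnt]

@[simp] lemma not_adj_inr_inr {j j' : Fin n} : ¬(Kmnt m n t).Adj (inr j) (inr j') := by
  simp [Kmnt]

end Kmnt

lemma SimpleGraph.Walk.le_length_add_of_le_succ {V : Type*} {G : SimpleGraph V} (g : V → ℕ)
    (hg : ∀ ⦃u v⦄, G.Adj u v → g v ≤ g u + 1) {x y : V} (p : G.Walk x y) :
    g y ≤ p.length + g x := by
  induction p with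
  | nil => simp
  | cons h _ ih => rw [Walk.length_cons]; have := hg h; omega

namespace Kmnt

variable {n : ℕ}

def distTwoTwo : Fin 2 ⊕ Fin n → Fin 2 ⊕ Fin n → ℕ
  | inl i, inl i' => if i = i' then 0 else 2
  | inl i, inr j | inr j, inl i => if (i : ℕ) = j then 3 else 1
  | inr j, inr j' => if j = j' then 0 else if (j : ℕ) < 2 ∧ (j' : ℕ) < 2 then 4 else 2

lemma distTwoTwo_comm (x y : Fin 2 ⊕ Fin n) : distTwoTwo x y = distTwoTwo y x := by
  rcases x with i | j <;> rcases y with i' | j' <;> simp only [distTwoTwo, eq_comm, and_comm]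

lemma distTwoTwo_le_add_one_of_adj (x : Fin 2 ⊕ Fin n) {u v : Fin 2 ⊕ Fin n}
    (h : (Kmnt 2 n 2).Adj u v) : distTwoTwo x v ≤ distTwoTwo x u + 1 := by
  rcases x with ⟨i, hi⟩ | ⟨j, hj⟩ <;> rcases u with ⟨a, ha⟩ | ⟨b, hb⟩ <;>
    rcases v with ⟨a', ha'⟩ | ⟨b', hb'⟩ <;> simp [distTwoTwo] at h ⊢ <;> split_ifs <;> omega

lemma exists_walk_length_eq_distTwoTwo (hn : 3 ≤ n) (x y : Fin 2 ⊕ Fin n) :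
    ∃ p : (Kmnt 2 n 2).Walk x y, p.length = distTwoTwo x y := by
  let v₂ : Fin n := ⟨2, hn⟩
  have hv₂ : (v₂ : ℕ) = 2 := rfl
  have inl_inr (i : Fin 2) (j : Fin n) :
      ∃ p : (Kmnt 2 n 2).Walk (inl i) (inr j), p.length = distTwoTwo (inl i) (inr j) := by
    by_cases h : (i : ℕ) = j
    · exact ⟨.cons (v := inr v₂) (by simp; omega) (.cons (v := inl i.rev) (by simp; omega)
        (.cons (by simp; omega) .nil)), by simp [distTwoTwo, h]⟩
    · exact ⟨.cons (by simp; omega) .nil, by simp [distTwoTwo, h]⟩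
  rcases x with i | j <;> rcases y with i' | j'
  · by_cases h : i = i'
    · subst h; exact ⟨.nil, by simp [distTwoTwo]⟩
    · exact ⟨.cons (v := inr v₂) (by simp; omega) (.cons (by simp; omega) .nil),
        by simp [distTwoTwo, h]⟩
  · exact inl_inr i j'
  · obtain ⟨p, hp⟩ := inl_inr i' j
    exact ⟨p.reverse, by rw [Walk.length_reverse, hp, distTwoTwo_comm]⟩
  · by_cases h : j = j'
    · subst h; exact ⟨.nil, by simp [distTwoTwo]⟩
    by_cases hfar : (j : ℕ) < 2 ∧ (j' : ℕ) < 2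
    · exact ⟨.cons (v := inl ⟨j', hfar.2⟩) (by simp; omega) (.cons (v := inr v₂) (by simp; omega)
        (.cons (v := inl ⟨j, hfar.1⟩) (by simp; omega) (.cons (by simp; omega) .nil))),
        by simp [distTwoTwo, h, hfar]⟩
    · have hjj : (j : ℕ) ≠ j' := fun e => h (Fin.ext e)
      let a : Fin 2 := ⟨if (j : ℕ) = 0 ∨ (j' : ℕ) = 0 then 1 else 0, by split <;> omega⟩
      have ha : (a : ℕ) ≠ j ∧ (a : ℕ) ≠ j' := by simp only [a]; split <;> omega
      exact ⟨.cons (v := inl a) (by simp; omega) (.cons (by simp; omega) .nil),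
        by simp [distTwoTwo, h]; omega⟩

lemma dist_eq_distTwoTwo (hn : 3 ≤ n) (x y : Fin 2 ⊕ Fin n) :
    (Kmnt 2 n 2).dist x y = distTwoTwo x y := by
  obtain ⟨p, hp⟩ := exists_walk_length_eq_distTwoTwo hn x y
  obtain ⟨q, hq⟩ := p.reachable.exists_walk_length_eq_dist
  have hle := q.le_length_add_of_le_succ (distTwoTwo x) fun _ _ => distTwoTwo_le_add_one_of_adj x
  have hxx : distTwoTwo x x = 0 := by cases x <;> simp [distTwoTwo]
  exact le_antisymm (hp ▸ dist_le p) (by omega)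

end Kmnt

lemma Finset.sum_sum_ite_eq_zero_mul_mul {ι : Type*} [Fintype ι] [DecidableEq ι] (d : ℝ)
    (w : ι → ℝ) :
    ∑ i, ∑ j, (if i = j then 0 else d * w i * w j) = d * ((∑ i, w i) ^ 2 - ∑ i, w i ^ 2) := by
  have h (i j : ι) : (if i = j then 0 else d * w i * w j)
      = d * (w i * w j) - (if i = j then d * (w i * w j) else 0) := by
    split_ifs <;> ring
  simp only [h, Finset.sum_sub_distrib, Finset.sum_ite_eq, Finset.mem_univ, if_true,
    ← Finset.mul_sum, sq, Finset.sum_mul_sum]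
  ring

lemma Fintype.sum_fin_two_sum_fin_two_add {M : Type*} [AddCommMonoid M] {k : ℕ}
    (g : Fin 2 ⊕ Fin (2 + k) → M) :
    ∑ x, g x = g (inl 0) + g (inl 1) + g (inr (Fin.castAdd k 0)) + g (inr (Fin.castAdd k 1))
      + ∑ l, g (inr (Fin.natAdd 2 l)) := by
  simp only [Fintype.sum_sum_type, Fin.sum_univ_add, Fin.sum_univ_two, add_assoc]

-- `fᵀ D f` on `K_{2,2+k}^2` in terms of `a, b, x₀, x₁` (the values at `u₀, u₁, v₀, v₁`) and
-- the sum `W` and sum of squares `T` of the values at the other `v`'s.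
def reducedForm (a b x₀ x₁ W T : ℝ) : ℝ :=
  4 * a * b + 6 * (a * x₀ + b * x₁) + 2 * (a * x₁ + b * x₀) + 2 * (a + b) * W + 8 * x₀ * x₁
    + 4 * (x₀ + x₁) * W + 2 * W ^ 2 - 2 * T

lemma Kmnt.sum_dist_mul_mul {k : ℕ} (hk : 1 ≤ k) (f : Fin 2 ⊕ Fin (2 + k) → ℝ) :
    ∑ x, ∑ y, ((Kmnt 2 (2 + k) 2).dist x y : ℝ) * f x * f y =
      reducedForm (f (inl 0)) (f (inl 1)) (f (inr (Fin.castAdd k 0))) (f (inr (Fin.castAdd k 1)))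
        (∑ l, f (inr (Fin.natAdd 2 l))) (∑ l, f (inr (Fin.natAdd 2 l)) ^ 2) := by
  have hlt (l : Fin k) : ¬ 2 + (l : ℕ) ≤ 1 := by omega
  have h0 (l : Fin k) : (0 : ℕ) ≠ 2 + l := by omega
  have h1 (l : Fin k) : (1 : ℕ) ≠ 2 + l := by omega
  have hne (i : Fin 2) (l : Fin k) : Fin.natAdd 2 l ≠ Fin.castAdd k i := by
    simp [Fin.ext_iff]; omega
  simp only [dist_eq_distTwoTwo (by omega : 3 ≤ 2 + k), Fintype.sum_sum_type, Fin.sum_univ_add,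
    Fin.sum_univ_two]
  simp [distTwoTwo, hlt, h0, h1, hne, (hne _ _).symm, Finset.sum_sum_ite_eq_zero_mul_mul,
    Finset.sum_add_distrib, ← Finset.mul_sum, ← Finset.sum_mul, reducedForm]
  ring

-- The four terms: symmetric part, antisymmetric part, Cauchy–Schwarz defect, and the
-- quadratic polynomial in `l` that vanishes at the QE constant.
lemma reducedForm_identity {k l a b x₀ x₁ W : ℝ} (T : ℝ) (hW : a + b + x₀ + x₁ + W = 0) :
    2 * k * (l * (k + 2) + 4) * (l + 2) * (l * (a ^ 2 + b ^ 2 + x₀ ^ 2 + x₁ ^ 2 + T)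
      - reducedForm a b x₀ x₁ W T)
    = (l + 2) * ((l * (k + 2) + 4) * (x₀ + x₁) + 2 * (l + 2 - k) * (a + b)) ^ 2
      + k * (l * (k + 2) + 4) * (((l + 2) * (a - b) - 2 * (x₀ - x₁)) ^ 2
        + (l ^ 2 + 6 * l + 4) * (x₀ - x₁) ^ 2)
      + 2 * (l * (k + 2) + 4) * (l + 2) ^ 2 * (k * T - W ^ 2)
      + (l + 2) * k * ((k + 4) * l ^ 2 - 2 * (k - 6) * l - 4 * (k - 2)) * (a + b) ^ 2 := by
  obtain rfl : W = -(a + b + x₀ + x₁) := by linarith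
  unfold reducedForm
  ring

section reducedForm

variable {k l : ℝ} (hk : 0 < k) (hα : 0 < l * (k + 2) + 4) (hl : 0 < l + 2)
  (hE : (k + 4) * l ^ 2 - 2 * (k - 6) * l - 4 * (k - 2) = 0)
include hk hα hl hE

lemma reducedForm_le {a b x₀ x₁ W T : ℝ} (hanti : 0 ≤ l ^ 2 + 6 * l + 4)
    (hW : a + b + x₀ + x₁ + W = 0) (hWT : W ^ 2 ≤ k * T) :
    reducedForm a b x₀ x₁ W T ≤ l * (a ^ 2 + b ^ 2 + x₀ ^ 2 + x₁ ^ 2 + T) := by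
  have key := reducedForm_identity (k := k) (l := l) T hW
  rw [hE] at key
  have hpos : 0 < 2 * k * (l * (k + 2) + 4) * (l + 2) := by positivity
  have hrhs : 0 ≤ 2 * k * (l * (k + 2) + 4) * (l + 2) * (l * (a ^ 2 + b ^ 2 + x₀ ^ 2 + x₁ ^ 2 + T)
      - reducedForm a b x₀ x₁ W T) := by
    rw [key]
    have : 0 ≤ k * T - W ^ 2 := by linarith
    positivity
  exact sub_nonneg.mp ((mul_nonneg_iff_of_pos_left hpos).mp hrhs)

lemma reducedForm_eq_of_isExtremal {a x W T : ℝ}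
    (hx : (l * (k + 2) + 4) * x + 2 * (l + 2 - k) * a = 0) (hW : 2 * a + 2 * x + W = 0)
    (hT : k * T = W ^ 2) :
    reducedForm a a x x W T = l * (a ^ 2 + a ^ 2 + x ^ 2 + x ^ 2 + T) := by
  have key := reducedForm_identity (k := k) (l := l) T (by linarith : a + a + x + x + W = 0)
  have hzero : 2 * k * (l * (k + 2) + 4) * (l + 2) * (l * (a ^ 2 + a ^ 2 + x ^ 2 + x ^ 2 + T)
      - reducedForm a a x x W T) = 0 := by
    linear_combination key + 4 * (l + 2) * ((l * (k + 2) + 4) * x + 2 * (l + 2 - k) * a) * hx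
      + 2 * (l * (k + 2) + 4) * (l + 2) ^ 2 * hT + 4 * (l + 2) * k * a ^ 2 * hE
  have hpos : 2 * k * (l * (k + 2) + 4) * (l + 2) ≠ 0 := by positivity
  linarith [(mul_eq_zero.mp hzero).resolve_left hpos]

end reducedForm

noncomputable def qecValue (k : ℝ) : ℝ := (k - 6 + √(5 * k ^ 2 - 4 * k + 4)) / (k + 4)

section qecValue

variable {k : ℝ}

lemma add_four_mul_qecValue (hk : 0 ≤ k) :
    (k + 4) * qecValue k = k - 6 + √(5 * k ^ 2 - 4 * k + 4) := by
  unfold qecValue; field_simp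

lemma qecValue_isRoot (hk : 0 ≤ k) :
    (k + 4) * qecValue k ^ 2 - 2 * (k - 6) * qecValue k - 4 * (k - 2) = 0 := by
  have h := add_four_mul_qecValue hk
  have hs : √(5 * k ^ 2 - 4 * k + 4) ^ 2 = 5 * k ^ 2 - 4 * k + 4 :=
    sq_sqrt (by nlinarith [sq_nonneg (5 * k - 2)])
  apply mul_left_cancel₀ (by positivity : k + 4 ≠ 0)
  linear_combination (k - 6 + √(5 * k ^ 2 - 4 * k + 4) + (k + 4) * qecValue k - 2 * (k - 6)) * h
    + hs

lemma qecValue_add_two_pos (hk : 0 ≤ k) : 0 < qecValue k + 2 := by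
  have h := add_four_mul_qecValue hk
  have := sqrt_nonneg (5 * k ^ 2 - 4 * k + 4)
  nlinarith

lemma qecValue_mul_add_pos (hk : 0 ≤ k) : 0 < qecValue k * (k + 2) + 4 := by
  have h := add_four_mul_qecValue hk
  have := sqrt_nonneg (5 * k ^ 2 - 4 * k + 4)
  nlinarith

lemma qecValue_sq_add_nonneg (hk : 1 ≤ k) : 0 ≤ qecValue k ^ 2 + 6 * qecValue k + 4 := by
  have h := add_four_mul_qecValue (by linarith)
  have hs : √(5 * k ^ 2 - 4 * k + 4) ^ 2 = 5 * k ^ 2 - 4 * k + 4 :=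
    sq_sqrt (by nlinarith [sq_nonneg (5 * k - 2)])
  have := sqrt_nonneg (5 * k ^ 2 - 4 * k + 4)
  nlinarith

end qecValue

lemma exists_sum_sq_eq_one_of_sum_eq_zero {V : Type*} [Fintype V] (D : V → V → ℝ) {g : V → ℝ}
    (hg : 0 < ∑ x, g x ^ 2) (h0 : ∑ x, g x = 0) :
    ∃ f : V → ℝ, ∑ x, f x ^ 2 = 1 ∧ ∑ x, f x = 0 ∧
      (∑ x, ∑ y, D x y * g x * g y) / ∑ x, g x ^ 2 = ∑ x, ∑ y, D x y * f x * f y := by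
  set N := ∑ x, g x ^ 2
  refine ⟨fun x => g x / √N, ?_, ?_, ?_⟩
  · simp only [div_pow, sq_sqrt hg.le]
    rw [← Finset.sum_div, div_self hg.ne']
  · rw [← Finset.sum_div, h0, zero_div]
  · have h (x y : V) : D x y * (g x / √N) * (g y / √N) = D x y * g x * g y / N := by
      field_simp
      rw [sq_sqrt hg.le]
      ring
    simp only [h, ← Finset.sum_div]

namespace Kmnt

variable {k : ℕ}

lemma exists_quadForm_eq_qecValue (hk : 1 ≤ k) :
    ∃ f : Fin 2 ⊕ Fin (2 + k) → ℝ, ∑ x, f x ^ 2 = 1 ∧ ∑ x, f x = 0 ∧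
      qecValue k = ∑ x, ∑ y, ((Kmnt 2 (2 + k) 2).dist x y : ℝ) * f x * f y := by
  have hk0 : (0 : ℝ) < k := by exact_mod_cast hk
  set l := qecValue k
  have hα : 0 < l * (k + 2) + 4 := qecValue_mul_add_pos hk0.le
  -- the equality case of `reducedForm_identity`
  set a : ℝ := k * (l * (k + 2) + 4)
  set x : ℝ := -2 * k * (l + 2 - k)
  set w : ℝ := 4 * (l + 2 - k) - 2 * (l * (k + 2) + 4)
  let g : Fin 2 ⊕ Fin (2 + k) → ℝ :=
    Sum.elim (fun _ => a) (Fin.append (fun _ : Fin 2 => x) (fun _ : Fin k => w))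
  have hsum : ∑ y, g y = 0 := by
    rw [Fintype.sum_fin_two_sum_fin_two_add]; simp [g, a, x, w]; ring
  have hsq : ∑ y, g y ^ 2 = a ^ 2 + a ^ 2 + x ^ 2 + x ^ 2 + k * w ^ 2 := by
    rw [Fintype.sum_fin_two_sum_fin_two_add]; simp [g]
  have hpos : 0 < ∑ y, g y ^ 2 := by rw [hsq]; positivity
  have hform : ∑ y, ∑ z, ((Kmnt 2 (2 + k) 2).dist y z : ℝ) * g y * g z = l * ∑ y, g y ^ 2 := by
    rw [sum_dist_mul_mul hk, hsq]
    simp only [g, elim_inl, elim_inr, Fin.append_left, Fin.append_right, Finset.sum_const,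
      Finset.card_univ, Fintype.card_fin, nsmul_eq_mul]
    exact reducedForm_eq_of_isExtremal hk0 hα (qecValue_add_two_pos hk0.le)
      (qecValue_isRoot hk0.le) (by ring) (by ring) (by ring)
  obtain ⟨f, h1, h0, hf⟩ := exists_sum_sq_eq_one_of_sum_eq_zero _ hpos hsum
  exact ⟨f, h1, h0, by rw [← hf, hform, mul_div_cancel_right₀ _ hpos.ne']⟩

lemma quadForm_le_qecValue (hk : 1 ≤ k) (f : Fin 2 ⊕ Fin (2 + k) → ℝ)
    (h1 : ∑ x, f x ^ 2 = 1) (h0 : ∑ x, f x = 0) :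
    ∑ x, ∑ y, ((Kmnt 2 (2 + k) 2).dist x y : ℝ) * f x * f y ≤ qecValue k := by
  have hk1 : (1 : ℝ) ≤ k := by exact_mod_cast hk
  have hk0 : (0 : ℝ) ≤ k := by linarith
  rw [Fintype.sum_fin_two_sum_fin_two_add] at h1 h0
  have hWT := sq_sum_le_card_mul_sum_sq (s := Finset.univ) (f := fun l => f (inr (Fin.natAdd 2 l)))
  rw [Finset.card_univ, Fintype.card_fin] at hWT
  rw [sum_dist_mul_mul hk]
  calc _ ≤ qecValue k * _ :=
        reducedForm_le (by linarith) (qecValue_mul_add_pos hk0) (qecValue_add_two_pos hk0)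
          (qecValue_isRoot hk0) (qecValue_sq_add_nonneg hk1) h0 hWT
    _ = qecValue k := by rw [h1, mul_one]

end Kmnt

/-- QEC(K_{2,n}^2) = (n − 8 + √(5n² − 24n + 32))/(n + 2) for n ≥ 3. -/
theorem stmt1 (n : ℕ) (hn : 3 ≤ n) :
    IsGreatest {r : ℝ | ∃ f : Fin 2 ⊕ Fin n → ℝ,
        (∑ x, f x ^ 2) = 1 ∧ (∑ x, f x) = 0 ∧
        r = ∑ x, ∑ y, ((Kmnt 2 n 2).dist x y : ℝ) * f x * f y}
      (((n : ℝ) - 8 + Real.sqrt (5 * (n : ℝ) ^ 2 - 24 * n + 32)) / (n + 2)) := by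
  obtain ⟨k, rfl⟩ := Nat.exists_eq_add_of_le (by omega : 2 ≤ n)
  have hk : 1 ≤ k := by omega
  have hval : (((2 + k : ℕ) : ℝ) - 8 + √(5 * ((2 + k : ℕ) : ℝ) ^ 2 - 24 * ((2 + k : ℕ) : ℝ) + 32))
      / (((2 + k : ℕ) : ℝ) + 2) = qecValue k := by
    unfold qecValue; push_cast; ring_nf
  rw [hval]
  exact ⟨Kmnt.exists_quadForm_eq_qecValue hk,
    fun r ⟨f, h1, h0, hr⟩ => hr ▸ Kmnt.quadForm_le_qecValue hk f h1 h0⟩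
end

section
/- For 3 ≤ m ≤ n with n ≥ 4, the QE constant of K_{m,n}^m equals (mn − 4m − 2n + √(m²n² + 4n² − 4m²n))/(m + n). -/
open SimpleGraph Sum Finset

namespace SimpleGraph

variable {V : Type*} {G : SimpleGraph V} {u v w z : V}

lemma dist_eq_two_of_adj_of_adj (huv : u ≠ v) (hnadj : ¬G.Adj u v) (huw : G.Adj u w)
    (hwv : G.Adj w v) : G.dist u v = 2 := by
  rw [dist, edist_eq_two_iff.2 ⟨huv, hnadj, w, huw, hwv.symm⟩]
  rfl

lemma dist_eq_three_of_adj_of_adj_of_adj (hnadj : ¬G.Adj u v)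
    (hcommon : G.commonNeighbors u v = ∅) (huw : G.Adj u w) (hwz : G.Adj w z)
    (hzv : G.Adj z v) : G.dist u v = 3 := by
  have hne : u ≠ v := by
    rintro rfl
    exact (Set.eq_empty_iff_forall_notMem.1 hcommon w) ⟨huw, huw⟩
  have hle : G.edist u v ≤ 3 := (huw.toWalk.append (hwz.toWalk.append hzv.toWalk)).edist_le
  have hlt : 2 < G.edist u v := two_lt_edist_iff.2 ⟨hne, hnadj, hcommon⟩
  rw [dist, le_antisymm hle (Order.add_one_le_of_lt hlt)]
  rfl

end SimpleGraph

lemma exists_lt_three_ne_ne (i j : ℕ) : ∃ k < 3, k ≠ i ∧ k ≠ j := by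
  by_cases h0 : i ≠ 0 ∧ j ≠ 0
  · exact ⟨0, by omega, h0.1.symm, h0.2.symm⟩
  by_cases h1 : i ≠ 1 ∧ j ≠ 1
  · exact ⟨1, by omega, h1.1.symm, h1.2.symm⟩
  exact ⟨2, by omega, by omega, by omega⟩

section Kmnt

variable {m n : ℕ}

lemma Kmnt_adj_inl_inr (i : Fin m) (j : Fin n) :
    (Kmnt m n m).Adj (inl i) (inr j) ↔ (i : ℕ) ≠ j := by
  simp [Kmnt, fromRel_adj]

lemma Kmnt_not_adj_inl_inl (i j : Fin m) : ¬(Kmnt m n m).Adj (inl i) (inl j) := by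
  simp [Kmnt, fromRel_adj]

lemma Kmnt_not_adj_inr_inr (i j : Fin n) : ¬(Kmnt m n m).Adj (inr i) (inr j) := by
  simp [Kmnt, fromRel_adj]

lemma Kmnt_commonNeighbors_inl_inr (i : Fin m) (j : Fin n) :
    (Kmnt m n m).commonNeighbors (inl i) (inr j) = ∅ := by
  ext (k | k) <;> simp [mem_commonNeighbors, Kmnt_not_adj_inl_inl, Kmnt_not_adj_inr_inr]

lemma Kmnt_dist_inl_inl (hm : 3 ≤ m) (hmn : m ≤ n) (i j : Fin m) :
    (Kmnt m n m).dist (inl i) (inl j) = if i = j then 0 else 2 := by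
  split_ifs with h
  · rw [h, dist_self]
  obtain ⟨k, hk, hki, hkj⟩ := exists_lt_three_ne_ne i j
  refine dist_eq_two_of_adj_of_adj (w := inr ⟨k, by omega⟩) (by simpa using h)
    (Kmnt_not_adj_inl_inl i j) ?_ ?_
  · exact (Kmnt_adj_inl_inr _ _).2 (Ne.symm hki)
  · exact ((Kmnt_adj_inl_inr _ _).2 (Ne.symm hkj)).symm

lemma Kmnt_dist_inr_inr (hm : 3 ≤ m) (i j : Fin n) :
    (Kmnt m n m).dist (inr i) (inr j) = if i = j then 0 else 2 := by
  split_ifs with h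
  · rw [h, dist_self]
  obtain ⟨k, hk, hki, hkj⟩ := exists_lt_three_ne_ne i j
  refine dist_eq_two_of_adj_of_adj (w := inl ⟨k, by omega⟩) (by simpa using h)
    (Kmnt_not_adj_inr_inr i j) ?_ ?_
  · exact ((Kmnt_adj_inl_inr _ _).2 hki).symm
  · exact (Kmnt_adj_inl_inr _ _).2 hkj

lemma Kmnt_dist_inl_inr (hm : 3 ≤ m) (hmn : m ≤ n) (i : Fin m) (j : Fin n) :
    (Kmnt m n m).dist (inl i) (inr j) = if (i : ℕ) = j then 3 else 1 := by
  split_ifs with h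
  · obtain ⟨c, hc, hci, -⟩ := exists_lt_three_ne_ne i i
    obtain ⟨d, hd, hdi, hdc⟩ := exists_lt_three_ne_ne i c
    refine dist_eq_three_of_adj_of_adj_of_adj (w := inr ⟨c, by omega⟩) (z := inl ⟨d, by omega⟩)
      (by simpa [Kmnt_adj_inl_inr] using h) (Kmnt_commonNeighbors_inl_inr i j) ?_ ?_ ?_
    · exact (Kmnt_adj_inl_inr _ _).2 (Ne.symm hci)
    · exact ((Kmnt_adj_inl_inr _ _).2 hdc).symm
    · exact (Kmnt_adj_inl_inr _ _).2 (h ▸ hdi)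
  · exact dist_eq_one_iff_adj.2 ((Kmnt_adj_inl_inr i j).2 h)

end Kmnt

lemma sum_sum_ite_eq_mul_mul {ι : Type*} [Fintype ι] [DecidableEq ι] (a : ι → ℝ) (c d : ℝ) :
    ∑ i, ∑ j, (if i = j then c else d) * a i * a j
      = d * (∑ i, a i) ^ 2 + (c - d) * ∑ i, a i ^ 2 := by
  have h : ∀ i j, (if i = j then c else d) * a i * a j
      = d * (a i * a j) + if i = j then (c - d) * a i ^ 2 else 0 := by
    intro i j
    split_ifs with h
    · subst h; ring
    · ring
  simp only [h, sum_add_distrib, sum_ite_eq, mem_univ, if_true, ← mul_sum, sq, sum_mul_sum]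

lemma sum_sum_ite_val_eq_mul_mul {m n : ℕ} (hmn : m ≤ n) (a : Fin m → ℝ) (b : Fin n → ℝ)
    (c d : ℝ) :
    ∑ i : Fin m, ∑ j : Fin n, (if (i : ℕ) = j then c else d) * a i * b j
      = d * (∑ i, a i) * (∑ j, b j) + (c - d) * ∑ i, a i * b (Fin.castLE hmn i) := by
  have h : ∀ (i : Fin m) (j : Fin n), (if (i : ℕ) = j then c else d) * a i * b j
      = d * (a i * b j) + if Fin.castLE hmn i = j then (c - d) * (a i * b j) else 0 := by
    intro i j
    simp only [Fin.ext_iff, Fin.val_castLE]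
    split_ifs <;> ring
  simp only [h, sum_add_distrib, sum_ite_eq, mem_univ, if_true, ← mul_sum, sum_mul_sum, mul_assoc]

lemma Kmnt_quadForm {m n : ℕ} (hm : 3 ≤ m) (hmn : m ≤ n) (f : Fin m ⊕ Fin n → ℝ) :
    ∑ x, ∑ y, ((Kmnt m n m).dist x y : ℝ) * f x * f y
      = 2 * (∑ i, f (inl i)) ^ 2 - 2 * ∑ i, f (inl i) ^ 2
        + 2 * (∑ j, f (inr j)) ^ 2 - 2 * ∑ j, f (inr j) ^ 2
        + 2 * (∑ i, f (inl i)) * (∑ j, f (inr j))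
        + 4 * ∑ i, f (inl i) * f (inr (Fin.castLE hmn i)) := by
  have hsymm : ∑ j, ∑ i, ((Kmnt m n m).dist (inr j) (inl i) : ℝ) * f (inr j) * f (inl i)
      = ∑ i, ∑ j, ((Kmnt m n m).dist (inl i) (inr j) : ℝ) * f (inl i) * f (inr j) := by
    rw [sum_comm]
    exact sum_congr rfl fun i _ => sum_congr rfl fun j _ => by rw [dist_comm]; ring
  simp only [Fintype.sum_sum_type, sum_add_distrib, hsymm, Kmnt_dist_inl_inl hm hmn,
    Kmnt_dist_inr_inr hm, Kmnt_dist_inl_inr hm hmn, Nat.cast_ite, Nat.cast_zero, Nat.cast_ofNat,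
    Nat.cast_one, sum_sum_ite_eq_mul_mul, sum_sum_ite_val_eq_mul_mul hmn]
  ring

lemma Kmnt_quadForm_of_sum_eq_zero {m n : ℕ} (hm : 3 ≤ m) (hmn : m ≤ n)
    (f : Fin m ⊕ Fin n → ℝ) (h0 : ∑ x, f x = 0) (h1 : ∑ x, f x ^ 2 = 1) :
    ∑ x, ∑ y, ((Kmnt m n m).dist x y : ℝ) * f x * f y
      = 2 * (∑ i, f (inl i)) ^ 2 + 4 * ∑ i, f (inl i) * f (inr (Fin.castLE hmn i)) - 2 := by
  rw [Fintype.sum_sum_type] at h0 h1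
  rw [Kmnt_quadForm hm hmn]
  linear_combination (-2) * h1 + 2 * (∑ j, f (inr j)) * h0

/-- The larger root of `(M + N) x² - 2 M (N - 2) x - 4 (N - M)`. -/
noncomputable def kmnRoot (M N : ℝ) : ℝ :=
  (M * N - 2 * M + √(M ^ 2 * N ^ 2 + 4 * N ^ 2 - 4 * M ^ 2 * N)) / (M + N)

section kmnRoot

variable {M N : ℝ}

lemma add_mul_kmnRoot (h : M + N ≠ 0) :
    (M + N) * kmnRoot M N = M * N - 2 * M + √(M ^ 2 * N ^ 2 + 4 * N ^ 2 - 4 * M ^ 2 * N) :=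
  mul_div_cancel₀ _ h

lemma kmnRoot_sub_two (h : M + N ≠ 0) :
    (M * N - 4 * M - 2 * N + √(M ^ 2 * N ^ 2 + 4 * N ^ 2 - 4 * M ^ 2 * N)) / (M + N)
      = kmnRoot M N - 2 := by
  rw [kmnRoot, eq_sub_iff_add_eq, div_add' _ _ _ h]
  ring_nf

lemma kmnRoot_isRoot (hM : 0 < M) (hMN : M ≤ N) :
    (M + N) * kmnRoot M N ^ 2 = 2 * M * (N - 2) * kmnRoot M N + 4 * (N - M) := by
  set S := √(M ^ 2 * N ^ 2 + 4 * N ^ 2 - 4 * M ^ 2 * N)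
  have hS : S ^ 2 = M ^ 2 * N ^ 2 + 4 * N ^ 2 - 4 * M ^ 2 * N :=
    Real.sq_sqrt (by
      nlinarith [sq_nonneg (M * (N - 2)), mul_nonneg (sub_nonneg.2 hMN) (by linarith : 0 ≤ N + M)])
  have h := add_mul_kmnRoot (M := M) (N := N) (by linarith)
  refine mul_left_cancel₀ (show M + N ≠ 0 by linarith) ?_
  linear_combination ((M + N) * kmnRoot M N - M * (N - 2) + S) * h + hS

lemma two_le_kmnRoot (hM : 0 < M) (hN : 4 ≤ N) : 2 ≤ kmnRoot M N := by
  have hsq : (4 * M + 2 * N - M * N) ^ 2 ≤ M ^ 2 * N ^ 2 + 4 * N ^ 2 - 4 * M ^ 2 * N := by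
    nlinarith [mul_nonneg (mul_nonneg hM.le (by linarith : 0 ≤ M + N)) (by linarith : 0 ≤ N - 4)]
  have := Real.le_sqrt_of_sq_le hsq
  have := add_mul_kmnRoot (M := M) (N := N) (by linarith)
  nlinarith

lemma sub_two_le_kmnRoot (hM : 0 < M) (hMN : M ≤ N) : M - 2 ≤ kmnRoot M N := by
  have hsq : (M ^ 2 - 2 * N) ^ 2 ≤ M ^ 2 * N ^ 2 + 4 * N ^ 2 - 4 * M ^ 2 * N := by
    nlinarith [mul_nonneg (sq_nonneg M) (mul_nonneg (sub_nonneg.2 hMN) (by linarith : 0 ≤ N + M))]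
  have := Real.le_sqrt_of_sq_le hsq
  have := add_mul_kmnRoot (M := M) (N := N) (by linarith)
  nlinarith

end kmnRoot

/-- The problem left after Cauchy–Schwarz, in the variables `U, W, p, q, R` of the header,
with `M = m` and `N = n`. -/
lemma add_sq_div_two_add_sub_le {M N x U W p q R : ℝ} (hM : 0 < M) (hMN : M ≤ N)
    (hx2 : 2 ≤ x) (hxM : M - 2 ≤ x)
    (hx : (M + N) * x ^ 2 = 2 * M * (N - 2) * x + 4 * (N - M))
    (hp : 0 ≤ p) (hq : 0 ≤ q) (hR : 0 ≤ R)
    (hU : U ^ 2 ≤ M * p) (hW : W ^ 2 ≤ M * q) (hUR : U ^ 2 ≤ (N - M) * R)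
    (hsum : p + q + 2 * R = 2) :
    (U + W) ^ 2 / 2 + p - q ≤ x := by
  rcases hMN.eq_or_lt with rfl | hlt
  · have hU0 : U = 0 := by nlinarith
    subst hU0
    nlinarith [mul_nonneg (sub_nonneg.2 hx2) hp, mul_nonneg (sub_nonneg.2 hxM) hq,
      mul_nonneg (by linarith : 0 ≤ x) hR]
  · set A := (M + N) * x - (N - M) * (M + 2) with hA_def
    set C := (N - M) * (x + 2 - M) with hC_def
    have hAC : A * C = M ^ 2 * (N - M) ^ 2 := by linear_combination (N - M) * hx
    have hC : 0 ≤ C := mul_nonneg (by linarith) (by linarith)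
    have hA : 0 < A := by
      by_contra! h
      nlinarith [mul_nonneg (neg_nonneg.2 h) hC, mul_pos hM (sub_pos.2 hlt)]
    have hpsd : 0 ≤ A * U ^ 2 + C * W ^ 2 - 2 * M * (N - M) * (U * W) := by
      refine nonneg_of_mul_nonneg_right ?_ hA
      have : A * (A * U ^ 2 + C * W ^ 2 - 2 * M * (N - M) * (U * W))
          = (A * U - M * (N - M) * W) ^ 2 := by linear_combination W ^ 2 * hAC
      exact this ▸ sq_nonneg _
    have hp' : 0 ≤ (N - M) * (x - 2) * (M * p - U ^ 2) :=
      mul_nonneg (mul_nonneg (by linarith) (by linarith)) (by linarith)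
    have hq' : 0 ≤ (N - M) * (x + 2) * (M * q - W ^ 2) :=
      mul_nonneg (mul_nonneg (by linarith) (by linarith)) (by linarith)
    have hR' : 0 ≤ 2 * M * x * ((N - M) * R - U ^ 2) :=
      mul_nonneg (by positivity) (by linarith)
    rw [hA_def, hC_def] at hpsd
    refine le_of_mul_le_mul_left ?_ (mul_pos hM (sub_pos.2 hlt))
    linear_combination (hp' + hq' + hR' + hpsd) / 2 + M * (N - M) * x / 2 * hsum

lemma Fin.sq_sum_le_mul_sum_sq {n : ℕ} (f : Fin n → ℝ) : (∑ i, f i) ^ 2 ≤ n * ∑ i, f i ^ 2 := by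
  simpa using sq_sum_le_card_mul_sum_sq (s := univ) (f := f)

section Blocks

variable {m k : ℕ} {x : ℝ}

lemma two_mul_sq_sum_add_four_mul_sum_mul_le (hm : 0 < m) (hx2 : 2 ≤ x)
    (hxM : (m : ℝ) - 2 ≤ x)
    (hx : (m + (m + k) : ℝ) * x ^ 2 = 2 * m * ((m + k) - 2) * x + 4 * ((m + k) - m))
    (a b : Fin m → ℝ) (c : Fin k → ℝ) (hsum : ∑ i, a i + ∑ i, b i + ∑ j, c j = 0)
    (hnorm : ∑ i, a i ^ 2 + ∑ i, b i ^ 2 + ∑ j, c j ^ 2 = 1) :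
    2 * (∑ i, a i) ^ 2 + 4 * ∑ i, a i * b i ≤ x := by
  have hUc : ∑ i, (a i + b i) = -∑ j, c j := by rw [sum_add_distrib]; linarith
  have key := add_sq_div_two_add_sub_le (M := m) (N := m + k) (U := ∑ i, (a i + b i))
    (W := ∑ i, (a i - b i)) (p := ∑ i, (a i + b i) ^ 2) (q := ∑ i, (a i - b i) ^ 2)
    (R := ∑ j, c j ^ 2) (by exact_mod_cast hm) (by simp) hx2 hxM hx (by positivity)
    (by positivity) (by positivity) (Fin.sq_sum_le_mul_sum_sq _) (Fin.sq_sum_le_mul_sum_sq _)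
    (by rw [hUc, neg_sq, add_sub_cancel_left]; exact Fin.sq_sum_le_mul_sum_sq c)
    (by simp only [add_sq, sub_sq, sum_add_distrib, sum_sub_distrib] at hnorm ⊢; linarith)
  calc 2 * (∑ i, a i) ^ 2 + 4 * ∑ i, a i * b i
      = (∑ i, (a i + b i) + ∑ i, (a i - b i)) ^ 2 / 2
        + ∑ i, (a i + b i) ^ 2 - ∑ i, (a i - b i) ^ 2 := by
        simp only [add_sq, sub_sq, sum_add_distrib, sum_sub_distrib, mul_assoc, ← mul_sum]
        ring
    _ ≤ x := key

lemma exists_blockConst_eq (hm : 0 < m) (hx2 : 2 ≤ x)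
    (hx : (m + (m + k) : ℝ) * x ^ 2 = 2 * m * ((m + k) - 2) * x + 4 * ((m + k) - m)) :
    ∃ α β γ : ℝ, m * α + m * β + k * γ = 0 ∧ m * α ^ 2 + m * β ^ 2 + k * γ ^ 2 = 1 ∧
      2 * (m * α) ^ 2 + 4 * (m * (α * β)) = x := by
  have hm' : (0 : ℝ) < m := by exact_mod_cast hm
  -- up to normalisation, the maximiser among vectors constant on the three blocks
  set α₀ := x * (x + 2)
  set β₀ := x * (x + 2 - 2 * m)
  set γ₀ := x ^ 2 - 2 * m * x - 4
  set S := m * α₀ ^ 2 + m * β₀ ^ 2 + k * γ₀ ^ 2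
  have hS : 0 < S := by positivity
  have hsum : m * α₀ + m * β₀ + k * γ₀ = 0 := by linear_combination hx
  have hval : 2 * (m * α₀) ^ 2 + 4 * (m * (α₀ * β₀)) = x * S := by
    linear_combination (-x ^ 3 + 2 * m * x ^ 2 + 4 * x) * hx
  set t := (√S)⁻¹
  have ht : t ^ 2 * S = 1 := by
    rw [inv_pow, Real.sq_sqrt hS.le, inv_mul_cancel₀ hS.ne']
  refine ⟨t * α₀, t * β₀, t * γ₀, ?_, ?_, ?_⟩
  · linear_combination t * hsum
  · linear_combination ht
  · linear_combination t ^ 2 * hval + x * ht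

end Blocks

/-- QEC(K_{m,n}^m) = (mn − 4m − 2n + √(m²n² + 4n² − 4m²n))/(m + n) for 3 ≤ m ≤ n, n ≥ 4. -/
theorem stmt4 (m n : ℕ) (hm : 3 ≤ m) (hmn : m ≤ n) (hn : 4 ≤ n) :
    IsGreatest {r : ℝ | ∃ f : Fin m ⊕ Fin n → ℝ,
        (∑ x, f x ^ 2) = 1 ∧ (∑ x, f x) = 0 ∧
        r = ∑ x, ∑ y, ((Kmnt m n m).dist x y : ℝ) * f x * f y}
      (((m : ℝ) * n - 4 * m - 2 * n +
          Real.sqrt ((m : ℝ) ^ 2 * (n : ℝ) ^ 2 + 4 * (n : ℝ) ^ 2 - 4 * (m : ℝ) ^ 2 * n)) /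
        (m + n)) := by
  have hM : (0 : ℝ) < m := by positivity
  have hMN : (m : ℝ) ≤ n := by exact_mod_cast hmn
  rw [kmnRoot_sub_two (by positivity)]
  have hx := kmnRoot_isRoot hM hMN
  have hx2 := two_le_kmnRoot (N := n) hM (by exact_mod_cast hn)
  have hxM := sub_two_le_kmnRoot hM hMN
  generalize kmnRoot m n = x at hx hx2 hxM ⊢
  obtain ⟨k, rfl⟩ := Nat.exists_eq_add_of_le hmn
  push_cast at hx
  constructor
  · obtain ⟨α, β, γ, h0, h1, hval⟩ := exists_blockConst_eq (by omega) hx2 hx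
    set f : Fin m ⊕ Fin (m + k) → ℝ :=
      Sum.elim (fun _ => α) (fun j => if (j : ℕ) < m then β else γ)
    have hf0 : ∑ x, f x = 0 := by
      simpa [f, Fintype.sum_sum_type, Fin.sum_univ_add, add_assoc] using h0
    have hf1 : ∑ x, f x ^ 2 = 1 := by
      simpa [f, Fintype.sum_sum_type, Fin.sum_univ_add, add_assoc] using h1
    refine ⟨f, hf1, hf0, ?_⟩
    rw [Kmnt_quadForm_of_sum_eq_zero hm hmn f hf0 hf1]
    simpa [f] using hval.symm
  · rintro _ ⟨f, h1, h0, rfl⟩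
    rw [Kmnt_quadForm_of_sum_eq_zero hm hmn f h0 h1]
    rw [Fintype.sum_sum_type, Fin.sum_univ_add] at h0 h1
    have := two_mul_sq_sum_add_four_mul_sum_mul_le (by omega) hx2 hxM hx (fun i => f (inl i))
      (fun i => f (inr (Fin.castAdd k i))) (fun j => f (inr (Fin.natAdd m j)))
      (by linear_combination h0) (by linear_combination h1)
    exact sub_le_sub_right this 2
end

section
/- If a connected finite graph G admits a Tanaka quintuple, then G is of non-QE class, i.e., there exists a real function f on the vertices with sum zero such that Σ_{x,y} d(x,y) f(x) f(y) > 0. -/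
/-!
Put weights `1 - t, -1, -1, 1, t` on the five vertices `v₁, …, v₅` of a Tanaka quintuple; they sum
to zero. Since the distance function is symmetric with zero diagonal, the distance relations of
the quintuple collapse the quadratic form `∑ d(x, y) f(x) f(y)` to `-2t (t d(v₅, v₁) + 2)`, which
is positive for `t = -1 / (d(v₅, v₁) + 1)`.
-/

/-- A Tanaka quintuple in a graph `G`. -/
def TanakaQuintuple {V : Type*} (G : SimpleGraph V) (v1 v2 v3 v4 v5 : V) : Prop :=
  G.Adj v1 v2 ∧ G.Adj v3 v4 ∧
  G.dist v1 v3 = G.dist v2 v4 ∧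
  G.dist v1 v4 = G.dist v1 v3 + 1 ∧
  G.dist v2 v3 = G.dist v1 v3 + 1 ∧
  G.dist v5 v2 = G.dist v5 v1 + 1 ∧
  G.dist v5 v3 = G.dist v5 v4 + 1

open Finset

section TanakaWeight

variable {V : Type*} [DecidableEq V]

def tanakaWeight (v1 v2 v3 v4 v5 : V) (t : ℝ) : V → ℝ :=
  Pi.single v1 (1 - t) - Pi.single v2 1 - Pi.single v3 1 + Pi.single v4 1 + Pi.single v5 t

variable [Fintype V] (v1 v2 v3 v4 v5 : V) (t : ℝ)

theorem sum_tanakaWeight_mul (g : V → ℝ) :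
    ∑ x, tanakaWeight v1 v2 v3 v4 v5 t x * g x
      = (1 - t) * g v1 - g v2 - g v3 + g v4 + t * g v5 := by
  simp only [tanakaWeight, Pi.add_apply, Pi.sub_apply, add_mul, sub_mul, sum_add_distrib,
    sum_sub_distrib, Pi.single_apply, ite_mul, zero_mul, sum_ite_eq', mem_univ, if_true, one_mul]

theorem sum_tanakaWeight : ∑ x, tanakaWeight v1 v2 v3 v4 v5 t x = 0 := by
  simpa using sum_tanakaWeight_mul v1 v2 v3 v4 v5 t 1

theorem sum_sum_mul_tanakaWeight {D : V → V → ℝ} (hsymm : ∀ x y, D x y = D y x)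
    (hdiag : ∀ x, D x x = 0) (h12 : D v1 v2 = 1) (h34 : D v3 v4 = 1) (h24 : D v2 v4 = D v1 v3)
    (h14 : D v1 v4 = D v1 v3 + 1) (h23 : D v2 v3 = D v1 v3 + 1)
    (h52 : D v5 v2 = D v5 v1 + 1) (h53 : D v5 v3 = D v5 v4 + 1) :
    ∑ x, ∑ y, D x y * tanakaWeight v1 v2 v3 v4 v5 t x * tanakaWeight v1 v2 v3 v4 v5 t y
      = -2 * t * (t * D v5 v1 + 2) := by
  have hrow : ∀ x, ∑ y, D x y * tanakaWeight v1 v2 v3 v4 v5 t x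
      * tanakaWeight v1 v2 v3 v4 v5 t y
      = tanakaWeight v1 v2 v3 v4 v5 t x
        * ((1 - t) * D x v1 - D x v2 - D x v3 + D x v4 + t * D x v5) := by
    intro x
    rw [← sum_tanakaWeight_mul, mul_sum]
    exact sum_congr rfl fun y _ => by ring
  simp only [hrow, sum_tanakaWeight_mul, hdiag]
  rw [hsymm v2 v1, hsymm v3 v1, hsymm v4 v1, hsymm v3 v2, hsymm v4 v2, hsymm v4 v3,
    hsymm v1 v5, hsymm v2 v5, hsymm v3 v5, hsymm v4 v5, h12, h34, h24, h14, h23, h52, h53]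
  ring

end TanakaWeight

theorem stmt5_general {V : Type*} [Fintype V] (G : SimpleGraph V)
    (v1 v2 v3 v4 v5 : V) (h : TanakaQuintuple G v1 v2 v3 v4 v5) :
    ∃ f : V → ℝ, (∑ x, f x) = 0 ∧
      0 < ∑ x, ∑ y, (G.dist x y : ℝ) * f x * f y := by
  classical
  obtain ⟨h12, h34, h13, h14, h23, h52, h53⟩ := h
  have hp : 0 < (G.dist v5 v1 : ℝ) + 1 := by positivity
  refine ⟨tanakaWeight v1 v2 v3 v4 v5 (-((G.dist v5 v1 : ℝ) + 1)⁻¹), sum_tanakaWeight .., ?_⟩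
  rw [sum_sum_mul_tanakaWeight (D := fun x y => (G.dist x y : ℝ))]
  · field_simp
    linarith
  · exact fun x y => by simp only [G.dist_comm]
  · simp
  · simp [SimpleGraph.dist_eq_one_iff_adj.mpr h12]
  · simp [SimpleGraph.dist_eq_one_iff_adj.mpr h34]
  · exact_mod_cast h13.symm
  · exact_mod_cast h14
  · exact_mod_cast h23
  · exact_mod_cast h52
  · exact_mod_cast h53

/-- If a connected finite graph admits a Tanaka quintuple then it is of non-QE class. -/
theorem stmt5 {V : Type*} [Fintype V] (G : SimpleGraph V) (hG : G.Connected)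
    (v1 v2 v3 v4 v5 : V) (h : TanakaQuintuple G v1 v2 v3 v4 v5) :
    ∃ f : V → ℝ, (∑ x, f x) = 0 ∧
      0 < ∑ x, ∑ y, (G.dist x y : ℝ) * f x * f y :=
  stmt5_general G v1 v2 v3 v4 v5 h
end

section
/- If a connected finite graph G admits a modified Tanaka quintuple, then G is of non-QE class. Specifically, setting i = d(v1,v3), j = d(v1,v5), h = d(v4,v5), the function f with f(v1) = f(v4) = −(j+h), f(v2) = j+h, f(v3) = j+h−1, f(v5) = 1 and f = 0 elsewhere satisfies Σ_{x,y} d(x,y) f(x) f(y) = 2j > 0. -/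
/-- A modified Tanaka quintuple in a graph `G`. -/
def ModifiedTanakaQuintuple {V : Type*} (G : SimpleGraph V) (v1 v2 v3 v4 v5 : V) : Prop :=
  G.Adj v1 v2 ∧ G.Adj v3 v4 ∧
  G.dist v1 v3 = G.dist v2 v4 ∧
  G.dist v1 v4 = G.dist v1 v3 + 1 ∧
  G.dist v2 v3 = G.dist v1 v3 + 1 ∧
  G.dist v5 v2 = G.dist v5 v1 + 1 ∧
  G.dist v5 v3 = G.dist v5 v4

lemma sum_eq_five {V : Type*} [Fintype V] [DecidableEq V] (f : V → ℝ) (v1 v2 v3 v4 v5 : V)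
    (h12 : v1 ≠ v2) (h13 : v1 ≠ v3) (h14 : v1 ≠ v4) (h15 : v1 ≠ v5)
    (h23 : v2 ≠ v3) (h24 : v2 ≠ v4) (h25 : v2 ≠ v5)
    (h34 : v3 ≠ v4) (h35 : v3 ≠ v5) (h45 : v4 ≠ v5)
    (h0 : ∀ x, x ≠ v1 → x ≠ v2 → x ≠ v3 → x ≠ v4 → x ≠ v5 → f x = 0) :
    ∑ x, f x = f v1 + f v2 + f v3 + f v4 + f v5 := by
  have hsub : ∑ x ∈ ({v1, v2, v3, v4, v5} : Finset V), f x = ∑ x, f x := by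
    apply Finset.sum_subset (Finset.subset_univ _)
    intro x _ hx
    simp only [Finset.mem_insert, Finset.mem_singleton, not_or] at hx
    exact h0 x hx.1 hx.2.1 hx.2.2.1 hx.2.2.2.1 hx.2.2.2.2
  rw [← hsub]
  rw [show ({v1, v2, v3, v4, v5} : Finset V) = insert v1 (insert v2 (insert v3 (insert v4 {v5}))) from rfl]
  rw [Finset.sum_insert (by simp [h12, h13, h14, h15]),
      Finset.sum_insert (by simp [h23, h24, h25]),
      Finset.sum_insert (by simp [h34, h35]),
      Finset.sum_insert (by simp [h45]),
      Finset.sum_singleton]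
  ring

/-- If a connected finite graph admits a modified Tanaka quintuple then it is of non-QE class;
with `j = d(v1,v5)` and `h = d(v4,v5)`, the function `f` with `f v1 = f v4 = −(j+h)`,
`f v2 = j+h`, `f v3 = j+h−1`, `f v5 = 1` and `f = 0` elsewhere has zero sum and
quadratic form `2j > 0`. -/
theorem stmt6 {V : Type*} [Fintype V] (G : SimpleGraph V) (hG : G.Connected)
    (v1 v2 v3 v4 v5 : V) (h : ModifiedTanakaQuintuple G v1 v2 v3 v4 v5) :
    ∃ f : V → ℝ,
      f v1 = -((G.dist v1 v5 : ℝ) + G.dist v4 v5) ∧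
      f v4 = -((G.dist v1 v5 : ℝ) + G.dist v4 v5) ∧
      f v2 = (G.dist v1 v5 : ℝ) + G.dist v4 v5 ∧
      f v3 = (G.dist v1 v5 : ℝ) + G.dist v4 v5 - 1 ∧
      f v5 = 1 ∧
      (∀ x, x ≠ v1 → x ≠ v2 → x ≠ v3 → x ≠ v4 → x ≠ v5 → f x = 0) ∧
      (∑ x, f x) = 0 ∧
      (∑ x, ∑ y, (G.dist x y : ℝ) * f x * f y) = 2 * (G.dist v1 v5 : ℝ) ∧
      0 < 2 * (G.dist v1 v5 : ℝ) := by
  classical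
  obtain ⟨hadj12, hadj34, e1, e2, e3, e4, e5⟩ := h
  have d12 : G.dist v1 v2 = 1 := SimpleGraph.dist_eq_one_iff_adj.mpr hadj12
  have d34 : G.dist v3 v4 = 1 := SimpleGraph.dist_eq_one_iff_adj.mpr hadj34
  -- distinctness
  have n12 : v1 ≠ v2 := hadj12.ne
  have n34 : v3 ≠ v4 := hadj34.ne
  have n13 : v1 ≠ v3 := by
    intro he
    have hi0 : G.dist v1 v3 = 0 := by rw [he, SimpleGraph.dist_self]
    have h24 : v2 = v4 := hG.dist_eq_zero_iff.mp (by omega)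
    rw [← he] at e5
    rw [← h24] at e5
    omega
  have ipos : 0 < G.dist v1 v3 := hG.pos_dist_of_ne n13
  have n14 : v1 ≠ v4 := by
    intro he
    rw [← he, SimpleGraph.dist_self] at e2
    omega
  have n23 : v2 ≠ v3 := by
    intro he
    rw [← he, SimpleGraph.dist_self] at e3
    omega
  have n24 : v2 ≠ v4 := by
    intro he
    rw [← he, SimpleGraph.dist_self] at e1
    omega
  have n15 : v1 ≠ v5 := by
    intro he
    rw [← he] at e5
    omega
  have n25 : v2 ≠ v5 := by
    intro he
    rw [← he, SimpleGraph.dist_self] at e4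
    omega
  have n35 : v3 ≠ v5 := by
    intro he
    rw [← he, SimpleGraph.dist_self] at e5
    omega
  have n45 : v4 ≠ v5 := by
    intro he
    rw [← he, SimpleGraph.dist_self] at e5
    rw [SimpleGraph.dist_comm] at e5
    omega
  have jpos : 0 < G.dist v1 v5 := hG.pos_dist_of_ne n15
  -- abbreviations
  set i := G.dist v1 v3 with hi
  set j := G.dist v1 v5 with hj
  set k := G.dist v4 v5 with hk
  -- all distances
  have d21 : G.dist v2 v1 = 1 := by rw [SimpleGraph.dist_comm]; exact d12
  have d43 : G.dist v4 v3 = 1 := by rw [SimpleGraph.dist_comm]; exact d34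
  have d31 : G.dist v3 v1 = i := by rw [SimpleGraph.dist_comm]
  have d24 : G.dist v2 v4 = i := e1.symm
  have d42 : G.dist v4 v2 = i := by rw [SimpleGraph.dist_comm]; exact d24
  have d14 : G.dist v1 v4 = i + 1 := e2
  have d41 : G.dist v4 v1 = i + 1 := by rw [SimpleGraph.dist_comm]; exact d14
  have d23 : G.dist v2 v3 = i + 1 := e3
  have d32 : G.dist v3 v2 = i + 1 := by rw [SimpleGraph.dist_comm]; exact d23
  have d51 : G.dist v5 v1 = j := by rw [SimpleGraph.dist_comm]
  have d52 : G.dist v5 v2 = j + 1 := by rw [e4, d51]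
  have d25 : G.dist v2 v5 = j + 1 := by rw [SimpleGraph.dist_comm]; exact d52
  have d54 : G.dist v5 v4 = k := by rw [SimpleGraph.dist_comm]
  have d53 : G.dist v5 v3 = k := by rw [e5, d54]
  have d35 : G.dist v3 v5 = k := by rw [SimpleGraph.dist_comm]; exact d53
  have d11 : G.dist v1 v1 = 0 := SimpleGraph.dist_self
  have d22 : G.dist v2 v2 = 0 := SimpleGraph.dist_self
  have d33 : G.dist v3 v3 = 0 := SimpleGraph.dist_self
  have d44 : G.dist v4 v4 = 0 := SimpleGraph.dist_self
  have d55 : G.dist v5 v5 = 0 := SimpleGraph.dist_self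
  -- the function
  set f : V → ℝ := fun x =>
    if x = v1 then -((j : ℝ) + k) else if x = v2 then (j : ℝ) + k
    else if x = v3 then (j : ℝ) + k - 1 else if x = v4 then -((j : ℝ) + k)
    else if x = v5 then 1 else 0 with hf
  have f1 : f v1 = -((j : ℝ) + k) := by simp [hf]
  have f2 : f v2 = (j : ℝ) + k := by simp [hf, n12.symm]
  have f3 : f v3 = (j : ℝ) + k - 1 := by simp [hf, n13.symm, n23.symm]
  have f4 : f v4 = -((j : ℝ) + k) := by simp [hf, n14.symm, n24.symm, n34.symm]
  have f5 : f v5 = 1 := by simp [hf, n15.symm, n25.symm, n35.symm, n45.symm]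
  have f0 : ∀ x, x ≠ v1 → x ≠ v2 → x ≠ v3 → x ≠ v4 → x ≠ v5 → f x = 0 := by
    intro x h1 h2 h3 h4 h5
    simp [hf, h1, h2, h3, h4, h5]
  refine ⟨f, f1, f4, f2, f3, f5, f0, ?_, ?_, ?_⟩
  · rw [sum_eq_five f v1 v2 v3 v4 v5 n12 n13 n14 n15 n23 n24 n25 n34 n35 n45 f0]
    rw [f1, f2, f3, f4, f5]; ring
  · have inner0 : ∀ x : V, x ≠ v1 → x ≠ v2 → x ≠ v3 → x ≠ v4 → x ≠ v5 →
        (∑ y, (G.dist x y : ℝ) * f x * f y) = 0 := by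
      intro x h1 h2 h3 h4 h5
      rw [f0 x h1 h2 h3 h4 h5]
      simp
    rw [sum_eq_five (fun x => ∑ y, (G.dist x y : ℝ) * f x * f y) v1 v2 v3 v4 v5
        n12 n13 n14 n15 n23 n24 n25 n34 n35 n45 inner0]
    have expand : ∀ x : V, (∑ y, (G.dist x y : ℝ) * f x * f y) =
        (G.dist x v1 : ℝ) * f x * f v1 + (G.dist x v2 : ℝ) * f x * f v2 +
        (G.dist x v3 : ℝ) * f x * f v3 + (G.dist x v4 : ℝ) * f x * f v4 +
        (G.dist x v5 : ℝ) * f x * f v5 := by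
      intro x
      exact sum_eq_five (fun y => (G.dist x y : ℝ) * f x * f y) v1 v2 v3 v4 v5
        n12 n13 n14 n15 n23 n24 n25 n34 n35 n45
        (fun y h1 h2 h3 h4 h5 => by simp only [f0 y h1 h2 h3 h4 h5, mul_zero])
    rw [expand v1, expand v2, expand v3, expand v4, expand v5]
    rw [f1, f2, f3, f4, f5, d11, d12, d31, d14, d21, d22, d23, d24, d25,
        d32, d33, d34, d35, d41, d42, d43, d44, d51, d52, d53, d54, d55]
    rw [SimpleGraph.dist_comm (u := v1) (v := v3), SimpleGraph.dist_comm (u := v4) (v := v5)]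
    rw [d31, d54]
    push_cast
    ring
  · have : (0 : ℝ) < j := by exact_mod_cast jpos
    linarith
end

section
/- If (v1, v2, v3, v4, v5) is a Tanaka quintuple in a graph G and (v1 = a_0, a_1, …, a_r = v3) and (v2 = b_0, b_1, …, b_r = v4) are geodesics, then the vertex sets {a_0,…,a_r} and {b_0,…,b_r} are disjoint, and v5 lies in neither of them. -/
lemma geodesic_split {V : Type*} {G : SimpleGraph V} (hG : G.Connected) {u w x : V}
    (p : G.Walk u w) (hp : p.length = G.dist u w) (hx : x ∈ p.support) :
    G.dist u x + G.dist x w = G.dist u w := by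
  obtain ⟨p1, p2, rfl⟩ := SimpleGraph.Walk.mem_support_iff_exists_append.mp hx
  have h1 : G.dist u x ≤ p1.length := SimpleGraph.dist_le _
  have h2 : G.dist x w ≤ p2.length := SimpleGraph.dist_le _
  have htri := hG.dist_triangle (u := u) (v := x) (w := w)
  have hlen := SimpleGraph.Walk.length_append p1 p2
  omega

/-- If `(v1,…,v5)` is a Tanaka quintuple and `p : v1 → v3`, `q : v2 → v4` are geodesics,
then the vertex sets of `p` and `q` are disjoint and `v5` lies in neither of them. -/
theorem stmt7 {V : Type*} (G : SimpleGraph V) (hG : G.Connected)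
    (v1 v2 v3 v4 v5 : V) (h : TanakaQuintuple G v1 v2 v3 v4 v5)
    (p : G.Walk v1 v3) (q : G.Walk v2 v4)
    (hp : p.length = G.dist v1 v3) (hq : q.length = G.dist v2 v4) :
    p.support.Disjoint q.support ∧ v5 ∉ p.support ∧ v5 ∉ q.support := by
  obtain ⟨h12, h34, h13, h14, h23, h52, h53⟩ := h
  refine ⟨?_, ?_, ?_⟩
  · intro x hxp hxq
    have k1 := geodesic_split hG p hp hxp
    have k2 := geodesic_split hG q hq hxq
    have t1 := hG.dist_triangle (u := v2) (v := x) (w := v3)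
    have t2 := hG.dist_triangle (u := v1) (v := x) (w := v4)
    have c1 : G.dist v2 x = G.dist x v2 := G.dist_comm ..
    omega
  · intro hxp
    have k1 := geodesic_split hG p hp hxp
    have k2 := h53
    have t2 := hG.dist_triangle (u := v1) (v := v5) (w := v4)
    have c1 : G.dist v1 v5 = G.dist v5 v1 := G.dist_comm ..
    have c2 : G.dist v5 v3 = G.dist v3 v5 := G.dist_comm ..
    omega
  · intro hxq
    have k1 := geodesic_split hG q hq hxq
    have t2 := hG.dist_triangle (u := v1) (v := v5) (w := v4)
    have c1 : G.dist v1 v5 = G.dist v5 v1 := G.dist_comm ..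
    have c2 : G.dist v5 v4 = G.dist v4 v5 := G.dist_comm ..
    have c3 : G.dist v5 v2 = G.dist v2 v5 := G.dist_comm ..
    omega
end

section
/- For every k ≥ 3, the n×n matrix A_n with n = 2k and entries a_{i,j} = min{i, n+1−i} + min{j, n+1−j} − min{|i−j|, n−|i−j|} (1 ≤ i, j ≤ n) is positive semidefinite; in fact A_{2k} = J(1,2k) + J(1,k) + J(k+1,2k) + 2 Σ_{p=2}^{k} J(p, p+k−1), where J(p,q) denotes the n×n matrix whose (i,j) entry is 1 if p ≤ i, j ≤ q and 0 otherwise. -/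
/-- The n x n matrix with 1-based entries
a_{i,j} = min(i, n+1-i) + min(j, n+1-j) - min(|i-j|, n-|i-j|).
Here indices i : Fin n represent the 1-based index i+1. -/
noncomputable def Amat (n : ℕ) : Matrix (Fin n) (Fin n) ℝ := fun i j =>
  min ((i : ℝ) + 1) ((n : ℝ) - i) + min ((j : ℝ) + 1) ((n : ℝ) - j)
    - min |(i : ℝ) - (j : ℝ)| ((n : ℝ) - |(i : ℝ) - (j : ℝ)|)

/-- The n x n matrix J(p,q) (1-based) whose (i,j) entry is 1 if p <= i, j <= q
and 0 otherwise. -/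
def Jmat (n p q : ℕ) : Matrix (Fin n) (Fin n) ℝ := fun i j =>
  if p ≤ (i : ℕ) + 1 ∧ (i : ℕ) + 1 ≤ q ∧ p ≤ (j : ℕ) + 1 ∧ (j : ℕ) + 1 ≤ q then 1 else 0

/-!
Each `J(p,q)` is `v vᵀ` for the indicator vector `v` of `[p,q]`, so positive semidefiniteness
follows from the decomposition, whose coefficients are nonnegative. The decomposition is checked
entrywise: the windows `[p, p+k-1]`, `2 ≤ p ≤ k`, containing both `i` and `j` are those with
`max i j - k + 1 ≤ p ≤ min i j`, and with that count the entry identity is piecewise linear.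
-/

open Matrix Finset

def intervalIndicator (n p q : ℕ) : Fin n → ℝ := fun i =>
  if p ≤ (i : ℕ) + 1 ∧ (i : ℕ) + 1 ≤ q then 1 else 0

lemma Jmat_eq_vecMulVec (n p q : ℕ) :
    Jmat n p q = vecMulVec (intervalIndicator n p q) (intervalIndicator n p q) := by
  ext i j
  simp only [Jmat, intervalIndicator, vecMulVec_apply, ite_zero_mul_ite_zero, mul_one, and_assoc]

lemma Jmat_posSemidef (n p q : ℕ) : (Jmat n p q).PosSemidef := by
  rw [Jmat_eq_vecMulVec]
  exact posSemidef_vecMulVec_self_star _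

lemma Amat_two_mul_apply (k : ℕ) (i j : Fin (2 * k)) :
    Amat (2 * k) i j = ((min ((i : ℤ) + 1) (2 * k - i) + min ((j : ℤ) + 1) (2 * k - j)
      - min |(i : ℤ) - j| (2 * k - |(i : ℤ) - j|) : ℤ) : ℝ) := by
  simp only [Amat]
  push_cast
  ring_nf

lemma entry_eq_one_add_blocks_add_windows (k a b : ℕ) (ha : a < 2 * k) (hb : b < 2 * k) :
    min ((a : ℤ) + 1) (2 * k - a) + min ((b : ℤ) + 1) (2 * k - b)
        - min |(a : ℤ) - b| (2 * k - |(a : ℤ) - b|)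
      = 1 + (if a < k ∧ b < k then 1 else 0) + (if k ≤ a ∧ k ≤ b then 1 else 0)
        + 2 * (min (min a b + 1) k + 1 - max 2 (max a b + 2 - k) : ℕ) := by
  rw [abs_eq_max_neg]
  split_ifs <;> omega

lemma card_windows_containing (k a b : ℕ) :
    #{p ∈ Icc 2 k | p ≤ a + 1 ∧ a + 1 ≤ p + k - 1 ∧ p ≤ b + 1 ∧ b + 1 ≤ p + k - 1}
      = min (min a b + 1) k + 1 - max 2 (max a b + 2 - k) := by
  rw [← Nat.card_Icc]
  congr 1
  ext p
  simp only [mem_filter, mem_Icc]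
  omega

lemma Amat_eq_sum_Jmat (k : ℕ) :
    Amat (2 * k) = Jmat (2 * k) 1 (2 * k) + Jmat (2 * k) 1 k + Jmat (2 * k) (k + 1) (2 * k)
      + (2 : ℝ) • ∑ p ∈ Icc 2 k, Jmat (2 * k) p (p + k - 1) := by
  ext i j
  have hi := i.isLt
  have hj := j.isLt
  rw [Amat_two_mul_apply, entry_eq_one_add_blocks_add_windows k i j hi hj]
  simp only [Matrix.add_apply, Matrix.smul_apply, Matrix.sum_apply, Jmat, smul_eq_mul, sum_boole,
    card_windows_containing, Nat.le_add_left, true_and]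
  push_cast
  split_ifs <;> norm_num <;> omega

theorem stmt16_general (k : ℕ) :
    Amat (2 * k) = Jmat (2 * k) 1 (2 * k) + Jmat (2 * k) 1 k + Jmat (2 * k) (k + 1) (2 * k)
        + (2 : ℝ) • ∑ p ∈ Finset.Icc 2 k, Jmat (2 * k) p (p + k - 1) ∧
      (Amat (2 * k)).PosSemidef := by
  refine ⟨Amat_eq_sum_Jmat k, ?_⟩
  rw [Amat_eq_sum_Jmat]
  exact (((Jmat_posSemidef _ _ _).add (Jmat_posSemidef _ _ _)).add (Jmat_posSemidef _ _ _)).add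
    ((posSemidef_sum _ fun p _ => Jmat_posSemidef _ _ _).smul zero_le_two)

/-- For k >= 3, with n = 2k:
A_{2k} = J(1,2k) + J(1,k) + J(k+1,2k) + 2 * sum_{p=2}^{k} J(p, p+k-1),
and A_{2k} is positive semidefinite. -/
theorem stmt16 (k : ℕ) (hk : 3 ≤ k) :
    Amat (2 * k) = Jmat (2 * k) 1 (2 * k) + Jmat (2 * k) 1 k + Jmat (2 * k) (k + 1) (2 * k)
        + (2 : ℝ) • ∑ p ∈ Finset.Icc 2 k, Jmat (2 * k) p (p + k - 1) ∧
      (Amat (2 * k)).PosSemidef :=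
  stmt16_general k
end
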